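/- arXiv:0806.0918 — 3 statements merged into one kernel-verified Lean document; each statement's English description precedes it below -/
import Mathlib

section
/- Let X be an ℝ^d-valued random variable with distribution P, r > 0, and let (α_n) be a sequence of finite subsets of ℝ^d such that E[d(X,α_n)^r] → 0 as n → ∞. Then for every x ∈ supp(P) and every ε > 0, there exists N such that for all n ≥ N, B(x,ε) ∩ α_n ≠ ∅. -/
open MeasureTheory Metric Filter

/-- if the quantization errors tend to 0, then the quantizers are asymptotically
dense in the support of the distribution of `X`. -/
theorem quantizers_asymptotically_dense
    {Ω : Type*} [MeasurableSpace Ω] (μ : Measure Ω) [IsProbabilityMeasure μ]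
    {E : Type*} [NormedAddCommGroup E] [NormedSpace ℝ E] [MeasurableSpace E] [BorelSpace E]
    (X : Ω → E) (hX : Measurable X) (r : ℝ) (hr : 0 < r)
    (α : ℕ → Finset E) (hne : ∀ n, (α n).Nonempty)
    (herr : Tendsto (fun n => ∫⁻ ω, ENNReal.ofReal (infDist (X ω) (α n) ^ r) ∂μ)
      atTop (nhds 0)) :
    ∀ x : E, (∀ ε > 0, 0 < μ (X ⁻¹' ball x ε)) →
      ∀ ε > 0, ∃ N : ℕ, ∀ n ≥ N, (ball x ε ∩ ↑(α n)).Nonempty := by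
  intro x hx ε hε
  set δ : ℝ := ε / 2 with hδ
  have hδpos : 0 < δ := by positivity
  set s : Set Ω := X ⁻¹' ball x δ with hs
  have hsm : MeasurableSet s := hX measurableSet_ball
  have hμs : 0 < μ s := hx δ hδpos
  set c : ENNReal := ENNReal.ofReal (δ ^ r) * μ s with hc
  have hcpos : 0 < c := by
    apply ENNReal.mul_pos
    · simp [ENNReal.ofReal_pos]
      positivity
    · exact hμs.ne'
  have hev : ∀ᶠ n in atTop,
      (∫⁻ ω, ENNReal.ofReal (infDist (X ω) (α n) ^ r) ∂μ) < c :=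
    herr.eventually (Iio_mem_nhds hcpos)
  obtain ⟨N, hN⟩ := eventually_atTop.mp hev
  refine ⟨N, fun n hn => ?_⟩
  by_contra hempty
  rw [Set.not_nonempty_iff_eq_empty] at hempty
  have hlb : c ≤ ∫⁻ ω, ENNReal.ofReal (infDist (X ω) (α n) ^ r) ∂μ := by
    have h1 : c = ∫⁻ _ω in s, ENNReal.ofReal (δ ^ r) ∂μ := by
      rw [setLIntegral_const]
    rw [h1]
    refine le_trans (setLIntegral_mono' hsm ?_) (setLIntegral_le_lintegral _ _)
    intro ω hω
    apply ENNReal.ofReal_le_ofReal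
    apply Real.rpow_le_rpow hδpos.le _ hr.le
    -- δ ≤ infDist (X ω) (α n)
    by_contra hlt
    push_neg at hlt
    obtain ⟨a, ha, hda⟩ :=
      (infDist_lt_iff (s := (↑(α n) : Set E)) (by exact_mod_cast hne n)).mp hlt
    have haE : a ∉ ball x ε := by
      intro hmem
      have : a ∈ (ball x ε ∩ ↑(α n) : Set E) := ⟨hmem, ha⟩
      rw [hempty] at this
      exact this
    have hax : ε ≤ dist a x := by simpa [mem_ball] using haE
    have hXω : dist (X ω) x < δ := by simpa [hs, mem_ball] using hω
    have htri : dist a x ≤ dist a (X ω) + dist (X ω) x := dist_triangle a (X ω) x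
    rw [dist_comm a (X ω)] at htri
    have : ε / 2 = δ := rfl
    linarith
  exact absurd (hN n hn) (not_lt.mpr hlb)
end

section
/- Let X be an ℝ^d-valued random variable with distribution P, r > 0, α ⊂ ℝ^d a finite set, y ∈ ℝ^d, and set δ = d(y, α). Then for every b ∈ (0, 1/2), E[d(X,α)^r] − E[d(X, α ∪ {y})^r] ≥ (2^{−r} − b^r) · δ^r · P(B(y, bδ)), where B(y, s) is the open ball of radius s around y. -/
open MeasureTheory Metric

/-- adding the point `y` to a quantizer `α` decreases the `L^r` distortion by at
least `(2^{-r} - b^r) · δ^r · P(B(y, bδ))` where `δ = d(y, α)`, for every `b ∈ (0, 1/2)`.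
(Stated additively with lower Lebesgue integrals, i.e. `E[d(X,α)^r] - E[d(X,α∪{y})^r] ≥ …`.) -/
theorem distortion_decrease_of_adding_point
    {E : Type*} [NormedAddCommGroup E] [NormedSpace ℝ E] [MeasurableSpace E] [BorelSpace E]
    (P : Measure E) [IsProbabilityMeasure P] (r : ℝ) (hr : 0 < r)
    (α : Finset E) (hαne : α.Nonempty) (y : E) (b : ℝ) (hb0 : 0 < b) (hb : b < 1 / 2) :
    ENNReal.ofReal (((2 : ℝ)⁻¹ ^ r - b ^ r) * infDist y ↑α ^ r) * P (ball y (b * infDist y ↑α))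
        + ∫⁻ x, ENNReal.ofReal (infDist x (insert y (α : Set E)) ^ r) ∂P
      ≤ ∫⁻ x, ENNReal.ofReal (infDist x ↑α ^ r) ∂P := by
  set δ := infDist y (α : Set E) with hδ
  have hδ0 : 0 ≤ δ := infDist_nonneg
  have hαne' : (α : Set E).Nonempty := hαne
  have hconst0 : 0 ≤ ((2 : ℝ)⁻¹ ^ r - b ^ r) * δ ^ r := by
    apply mul_nonneg _ (Real.rpow_nonneg hδ0 r)
    have : b ^ r ≤ (2 : ℝ)⁻¹ ^ r := by
      apply Real.rpow_le_rpow hb0.le _ hr.le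
      linarith
    linarith
  set c : ENNReal := ENNReal.ofReal (((2 : ℝ)⁻¹ ^ r - b ^ r) * δ ^ r) with hc
  have key : ∀ x, (ball y (b * δ)).indicator (fun _ => c) x
      + ENNReal.ofReal (infDist x (insert y (α : Set E)) ^ r)
      ≤ ENNReal.ofReal (infDist x (α : Set E) ^ r) := by
    intro x
    have hmono : infDist x (insert y (α : Set E)) ≤ infDist x (α : Set E) :=
      infDist_le_infDist_of_subset (Set.subset_insert _ _) hαne'
    by_cases hx : x ∈ ball y (b * δ)
    · rw [Set.indicator_of_mem hx]
      have hxy : dist x y < b * δ := mem_ball.mp hx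
      have hxy0 : 0 ≤ dist x y := dist_nonneg
      -- infDist x (insert y α) ≤ dist x y < b * δ
      have h1 : infDist x (insert y (α : Set E)) ≤ b * δ := by
        have := infDist_le_dist_of_mem (Set.mem_insert y (α : Set E)) (x := x)
        linarith
      -- infDist x α ≥ δ / 2
      have h2 : δ / 2 ≤ infDist x (α : Set E) := by
        by_contra h
        push_neg at h
        obtain ⟨a, ha, hlt⟩ := (infDist_lt_iff hαne').mp h
        have hya : δ ≤ dist y a := infDist_le_dist_of_mem ha
        have htri : dist y a ≤ dist y x + dist x a := dist_triangle _ _ _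
        have : dist y x = dist x y := dist_comm _ _
        nlinarith
      have h1' : infDist x (insert y (α : Set E)) ^ r ≤ (b * δ) ^ r :=
        Real.rpow_le_rpow infDist_nonneg h1 hr.le
      have h2' : (δ / 2) ^ r ≤ infDist x (α : Set E) ^ r :=
        Real.rpow_le_rpow (by linarith) h2 hr.le
      rw [← ENNReal.ofReal_add hconst0 (Real.rpow_nonneg infDist_nonneg r)]
      apply ENNReal.ofReal_le_ofReal
      have hbd : (b * δ) ^ r = b ^ r * δ ^ r := Real.mul_rpow hb0.le hδ0
      have hd2 : (δ / 2) ^ r = (2 : ℝ)⁻¹ ^ r * δ ^ r := by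
        rw [← Real.mul_rpow (by norm_num) hδ0]; ring_nf
      nlinarith
    · rw [Set.indicator_of_notMem hx, zero_add]
      exact ENNReal.ofReal_le_ofReal (Real.rpow_le_rpow infDist_nonneg hmono hr.le)
  have hmeas : Measurable ((ball y (b * δ)).indicator (fun _ => c)) :=
    measurable_const.indicator measurableSet_ball
  calc c * P (ball y (b * δ)) + ∫⁻ x, ENNReal.ofReal (infDist x (insert y (α : Set E)) ^ r) ∂P
      = ∫⁻ x, (ball y (b * δ)).indicator (fun _ => c) x
          + ENNReal.ofReal (infDist x (insert y (α : Set E)) ^ r) ∂P := by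
        rw [lintegral_add_left hmeas, lintegral_indicator_const measurableSet_ball]
    _ ≤ ∫⁻ x, ENNReal.ofReal (infDist x (α : Set E) ^ r) ∂P := lintegral_mono key
end

section
/- Let s ≥ 1, let X, X_1, …, X_m be i.i.d. ℝ^d-valued random variables in L^s(ℙ), and let α ⊂ ℝ^d be a finite nonempty set with maximal radius ρ(α) = max_{a∈α}|a|. Then ρ(α) ≥ E[ max_{k≤m} |X_k| ] − m^{1/s} · ( E[ min_{a∈α} |X − a|^s ] )^{1/s}. -/
open MeasureTheory ProbabilityTheory Metric

/-!
Every point satisfies `‖x‖ ≤ ρ(α) + d(x, α)`, so `max_k ‖X_k‖ ≤ ρ(α) + max_k d(X_k, α)`.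
Bounding `(max_k d(X_k, α))^s` by `∑_k d(X_k, α)^s` and applying Jensen's inequality to the
concave map `t ↦ t^(1/s)` gives `E[max_k d(X_k, α)] ≤ (∑_k E[d(X_k, α)^s])^(1/s)`, and each
summand equals `E[d(X, α)^s]` because the `X_k` have the law of `X`.
-/

theorem Finset.sup'_rpow_le_sum_rpow {ι : Type*} {t : Finset ι} (ht : t.Nonempty) {f : ι → ℝ}
    (hf : ∀ i ∈ t, 0 ≤ f i) (p : ℝ) : (t.sup' ht f) ^ p ≤ ∑ i ∈ t, f i ^ p := by
  obtain ⟨k, hk, hsup⟩ := t.exists_mem_eq_sup' ht f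
  rw [hsup]
  exact Finset.single_le_sum (fun i hi => Real.rpow_nonneg (hf i hi) p) hk

theorem norm_le_sup'_norm_add_infDist {E : Type*} [SeminormedAddCommGroup E] (α : Finset E)
    (hα : α.Nonempty) (x : E) : ‖x‖ ≤ α.sup' hα (‖·‖) + infDist x α := by
  obtain ⟨a, ha, hdist⟩ :=
    α.finite_toSet.isCompact.exists_infDist_eq_dist (Finset.coe_nonempty.mpr hα) x
  have ha_le : ‖a‖ ≤ α.sup' hα (‖·‖) := Finset.le_sup' (‖·‖) (Finset.mem_coe.mp ha)
  have := norm_sub_norm_le x a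
  rw [hdist, dist_eq_norm]
  linarith

theorem sup'_norm_le_sup'_norm_add_sup'_infDist {ι E : Type*} [SeminormedAddCommGroup E]
    {t : Finset ι} (ht : t.Nonempty) (x : ι → E) (α : Finset E) (hα : α.Nonempty) :
    t.sup' ht (fun i => ‖x i‖) ≤ α.sup' hα (‖·‖) + t.sup' ht fun i => infDist (x i) α :=
  Finset.sup'_le _ _ fun i hi => (norm_le_sup'_norm_add_infDist α hα (x i)).trans
    (add_le_add le_rfl (Finset.le_sup' (fun i => infDist (x i) α) hi))

section Lyapunov

variable {Ω : Type*} [MeasurableSpace Ω] {μ : Measure Ω} {s : ℝ} {F : Ω → ℝ}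

theorem integrable_of_integrable_rpow [IsFiniteMeasure μ] (hs : 1 ≤ s) (hF0 : 0 ≤ F)
    (hF : AEStronglyMeasurable F μ) (hFs : Integrable (fun ω => F ω ^ s) μ) : Integrable F μ := by
  have h := integrable_norm_rpow_of_le hF zero_le_one (by linarith) hs
    (by simpa only [Real.norm_of_nonneg (hF0 _)] using hFs)
  simpa only [Real.rpow_one, Real.norm_of_nonneg (hF0 _)] using h

theorem integral_le_integral_rpow_rpow_one_div [IsProbabilityMeasure μ] (hs : 1 ≤ s) (hF0 : 0 ≤ F)
    (hF : AEStronglyMeasurable F μ) (hFs : Integrable (fun ω => F ω ^ s) μ) :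
    ∫ ω, F ω ∂μ ≤ (∫ ω, F ω ^ s ∂μ) ^ (1 / s) := by
  have hs0 : s ≠ 0 := by positivity
  have hroot : ∀ ω, (F ω ^ s) ^ (1 / s) = F ω := fun ω => by
    rw [one_div, Real.rpow_rpow_inv (hF0 ω) hs0]
  have hjensen := (Real.concaveOn_rpow (p := 1 / s) (by positivity)
      ((div_le_one (by positivity)).mpr hs)).le_map_integral
    (Real.continuous_rpow_const (by positivity)).continuousOn isClosed_Ici
    (Filter.Eventually.of_forall fun ω => Real.rpow_nonneg (hF0 ω) s) hFs
    (by simpa only [Function.comp_def, hroot] using integrable_of_integrable_rpow hs hF0 hF hFs)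
  simpa only [hroot] using hjensen

end Lyapunov

section FiniteMaximum

variable {Ω ι : Type*} [MeasurableSpace Ω] {μ : Measure Ω} {s : ℝ} {t : Finset ι}
  (ht : t.Nonempty) {f : ι → Ω → ℝ}

theorem Finset.measurable_sup'_fun (hf : ∀ i ∈ t, Measurable (f i)) :
    Measurable fun ω => t.sup' ht fun i => f i ω := by
  convert Finset.measurable_sup' ht hf with ω
  exact (Finset.sup'_apply ..).symm

variable (hf0 : ∀ i ∈ t, ∀ ω, 0 ≤ f i ω) (hf : ∀ i ∈ t, Measurable (f i))
  (hfs : ∀ i ∈ t, Integrable (fun ω => f i ω ^ s) μ)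
include hf0 hf hfs

theorem integrable_sup'_rpow : Integrable (fun ω => (t.sup' ht fun i => f i ω) ^ s) μ := by
  refine (integrable_finsetSum t hfs).mono'
    ((Finset.measurable_sup'_fun ht hf).pow_const s).aestronglyMeasurable
    (Filter.Eventually.of_forall fun ω => ?_)
  have hsup0 : 0 ≤ t.sup' ht fun i => f i ω :=
    Finset.le_sup'_of_le _ ht.choose_spec (hf0 _ ht.choose_spec ω)
  rw [Real.norm_of_nonneg (Real.rpow_nonneg hsup0 s)]
  exact Finset.sup'_rpow_le_sum_rpow ht (fun i hi => hf0 i hi ω) s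

theorem integrable_sup' [IsFiniteMeasure μ] (hs : 1 ≤ s) :
    Integrable (fun ω => t.sup' ht fun i => f i ω) μ :=
  integrable_of_integrable_rpow hs
    (fun ω => Finset.le_sup'_of_le _ ht.choose_spec (hf0 _ ht.choose_spec ω))
    (Finset.measurable_sup'_fun ht hf).aestronglyMeasurable (integrable_sup'_rpow ht hf0 hf hfs)

theorem integral_sup'_le_rpow_sum_integral_rpow [IsProbabilityMeasure μ] (hs : 1 ≤ s) :
    ∫ ω, t.sup' ht (fun i => f i ω) ∂μ ≤ (∑ i ∈ t, ∫ ω, f i ω ^ s ∂μ) ^ (1 / s) := by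
  have hF0 : ∀ ω, 0 ≤ t.sup' ht fun i => f i ω := fun ω =>
    Finset.le_sup'_of_le _ ht.choose_spec (hf0 _ ht.choose_spec ω)
  have hFs := integrable_sup'_rpow ht hf0 hf hfs
  calc ∫ ω, t.sup' ht (fun i => f i ω) ∂μ
      ≤ (∫ ω, (t.sup' ht fun i => f i ω) ^ s ∂μ) ^ (1 / s) :=
        integral_le_integral_rpow_rpow_one_div hs hF0
          (Finset.measurable_sup'_fun ht hf).aestronglyMeasurable hFs
    _ ≤ (∑ i ∈ t, ∫ ω, f i ω ^ s ∂μ) ^ (1 / s) := by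
        rw [← integral_finsetSum t hfs]
        refine Real.rpow_le_rpow (integral_nonneg fun ω => Real.rpow_nonneg (hF0 ω) s)
          (integral_mono hFs (integrable_finsetSum t hfs) fun ω => ?_) (by positivity)
        exact Finset.sup'_rpow_le_sum_rpow ht (fun i hi => hf0 i hi ω) s

end FiniteMaximum

theorem maximal_radius_random_quantization_lower_bound_general
    {Ω : Type*} [MeasurableSpace Ω] (μ : Measure Ω) [IsProbabilityMeasure μ]
    {E : Type*} [NormedAddCommGroup E] [MeasurableSpace E] [BorelSpace E]
    (s : ℝ) (hs : 1 ≤ s) (m : ℕ)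
    (X : Fin (m + 1) → Ω → E) (hmeas : ∀ i, Measurable (X i))
    (hident : ∀ i j, Measure.map (X i) μ = Measure.map (X j) μ)
    (α : Finset E) (hαne : α.Nonempty)
    (hintdist : Integrable (fun ω => infDist (X 0 ω) ↑α ^ s) μ)
    (hne : (Finset.univ : Finset (Fin m)).Nonempty) :
    (∫ ω, (Finset.univ.sup' hne fun i : Fin m => ‖X i.succ ω‖) ∂μ)
        - (m : ℝ) ^ (1 / s) * (∫ ω, infDist (X 0 ω) ↑α ^ s ∂μ) ^ (1 / s)
      ≤ α.sup' hαne fun a => ‖a‖ := by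
  set ρ := α.sup' hαne fun a => ‖a‖
  set d : Fin m → Ω → ℝ := fun k ω => infDist (X k.succ ω) α
  have hd0 : ∀ k ∈ Finset.univ, ∀ ω, 0 ≤ d k ω := fun _ _ _ => infDist_nonneg
  have hd : ∀ k ∈ Finset.univ, Measurable (d k) := fun k _ =>
    (continuous_infDist_pt _).measurable.comp (hmeas _)
  have hd_law : ∀ k, IdentDistrib (fun ω => d k ω ^ s) (fun ω => infDist (X 0 ω) α ^ s) μ μ :=
    fun k => (IdentDistrib.mk (hmeas _).aemeasurable (hmeas 0).aemeasurable (hident _ _)).comp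
      ((continuous_infDist_pt _).rpow_const fun _ => Or.inr (by linarith)).measurable
  have hds : ∀ k ∈ Finset.univ, Integrable (fun ω => d k ω ^ s) μ := fun k _ =>
    (hd_law k).integrable_iff.mpr hintdist
  have hsup := integrable_sup' hne hd0 hd hds hs
  rw [sub_le_iff_le_add]
  calc ∫ ω, (Finset.univ.sup' hne fun i : Fin m => ‖X i.succ ω‖) ∂μ
      ≤ ∫ ω, ρ + Finset.univ.sup' hne (fun k => d k ω) ∂μ :=
        integral_mono_of_nonneg (Filter.Eventually.of_forall fun ω =>
            Finset.le_sup'_of_le _ hne.choose_spec (norm_nonneg _))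
          ((integrable_const ρ).add hsup)
          (Filter.Eventually.of_forall fun ω =>
            sup'_norm_le_sup'_norm_add_sup'_infDist hne (fun i => X i.succ ω) α hαne)
    _ ≤ ρ + (∑ k, ∫ ω, d k ω ^ s ∂μ) ^ (1 / s) := by
        rw [integral_add (integrable_const ρ) hsup, integral_const, probReal_univ, one_smul]
        exact add_le_add le_rfl (integral_sup'_le_rpow_sum_integral_rpow hne hd0 hd hds hs)
    _ = _ := by
        simp only [fun k => (hd_law k).integral_eq, Finset.sum_const, Finset.card_univ,
          Fintype.card_fin, nsmul_eq_mul]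
        rw [Real.mul_rpow (Nat.cast_nonneg m)
          (integral_nonneg fun ω => Real.rpow_nonneg infDist_nonneg s)]

/-- random quantization lower bound: for i.i.d. `X, X_1, …, X_m` in `L^s` (`s ≥ 1`)
and any finite quantizer `α`,
`ρ(α) ≥ E[max_{k≤m} |X_k|] − m^{1/s} (E[min_{a∈α}|X−a|^s])^{1/s}`.
Here `X = X 0` and `X_k = X k.succ`. -/
theorem maximal_radius_random_quantization_lower_bound
    {Ω : Type*} [MeasurableSpace Ω] (μ : Measure Ω) [IsProbabilityMeasure μ]
    {E : Type*} [NormedAddCommGroup E] [NormedSpace ℝ E] [MeasurableSpace E] [BorelSpace E]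
    (s : ℝ) (hs : 1 ≤ s) (m : ℕ) (hm : 0 < m)
    (X : Fin (m + 1) → Ω → E) (hmeas : ∀ i, Measurable (X i))
    (hindep : iIndepFun X μ)
    (hident : ∀ i j, Measure.map (X i) μ = Measure.map (X j) μ)
    (hmom : ∀ i, Integrable (fun ω => ‖X i ω‖ ^ s) μ)
    (α : Finset E) (hαne : α.Nonempty)
    (hintdist : Integrable (fun ω => infDist (X 0 ω) ↑α ^ s) μ)
    (hne : (Finset.univ : Finset (Fin m)).Nonempty) :
    (∫ ω, (Finset.univ.sup' hne fun i : Fin m => ‖X i.succ ω‖) ∂μ)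
        - (m : ℝ) ^ (1 / s) * (∫ ω, infDist (X 0 ω) ↑α ^ s ∂μ) ^ (1 / s)
      ≤ α.sup' hαne fun a => ‖a‖ :=
  maximal_radius_random_quantization_lower_bound_general μ s hs m X hmeas hident α hαne hintdist hne
end
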